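/- arXiv:1501.06097 — 2 statements merged into one kernel-verified Lean document; each statement's English description precedes it below -/
import Mathlib

section
/- The map f' : S⁴ → S² ⊂ ℂ × ℝ given by f'(z₁, z₂, x) = (4 z₁ z̄₂ (|z₁|² − |z₂|² − i x √(2 − x²)), 8|z₁|²|z₂|² − 1) is well defined, i.e., for every (z₁, z₂, x) ∈ ℂ² × ℝ with |z₁|² + |z₂|² + x² = 1, the image point satisfies |4 z₁ z̄₂ (|z₁|² − |z₂|² − i x √(2 − x²))|² + (8|z₁|²|z₂|² − 1)² = 1. -/
open Complex

/-! With `p = |z₁|²`, `q = |z₂|²` the sphere condition gives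
`x²(2 − x²) = 1 − (1 − x²)² = 1 − (p + q)²`, so the squared norm of the bracket is
`(p − q)² + 1 − (p + q)² = 1 − 4pq`, and `16pq(1 − 4pq) + (8pq − 1)² = 1`. -/

theorem sq_sub_add_mul_two_sub_eq {p q x : ℝ} (h : p + q + x ^ 2 = 1) :
    (p - q) ^ 2 + x ^ 2 * (2 - x ^ 2) = 1 - 4 * p * q := by
  have hx : x ^ 2 = 1 - (p + q) := by linarith
  rw [hx]
  ring

theorem norm_ofReal_sub_I_mul_sq (u v : ℝ) : ‖(u : ℂ) - I * v‖ ^ 2 = u ^ 2 + v ^ 2 := by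
  rw [Complex.sq_norm, show (u : ℂ) - I * v = u + (-v : ℝ) * I by push_cast; ring, normSq_add_mul_I]
  ring

/-- The Matsumoto–Fukaya type map `f'(z₁, z₂, x) =
`(4 z₁ z̄₂ (|z₁|² − |z₂|² − i x √(2 − x²)), 8|z₁|²|z₂|² − 1)` is well defined from
`S⁴ = {(z₁,z₂,x) : |z₁|² + |z₂|² + x² = 1}` to `S² = {(w,t) : |w|² + t² = 1}`. -/
theorem matsumoto_fukaya_well_defined (z₁ z₂ : ℂ) (x : ℝ)
    (h : ‖z₁‖ ^ 2 + ‖z₂‖ ^ 2 + x ^ 2 = 1) :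
    ‖4 * z₁ * (starRingEnd ℂ) z₂ *
        ((‖z₁‖ ^ 2 : ℂ) - (‖z₂‖ ^ 2 : ℂ)
          - Complex.I * x * Real.sqrt (2 - x ^ 2))‖ ^ 2
      + (8 * ‖z₁‖ ^ 2 * ‖z₂‖ ^ 2 - 1) ^ 2 = 1 := by
  have hsqrt : Real.sqrt (2 - x ^ 2) ^ 2 = 2 - x ^ 2 := Real.sq_sqrt (by nlinarith)
  have hbracket : ‖(‖z₁‖ ^ 2 : ℂ) - (‖z₂‖ ^ 2 : ℂ) - I * x * Real.sqrt (2 - x ^ 2)‖ ^ 2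
      = 1 - 4 * ‖z₁‖ ^ 2 * ‖z₂‖ ^ 2 := by
    have := norm_ofReal_sub_I_mul_sq (‖z₁‖ ^ 2 - ‖z₂‖ ^ 2) (x * Real.sqrt (2 - x ^ 2))
    push_cast at this
    rw [mul_assoc, this, mul_pow, hsqrt, sq_sub_add_mul_two_sub_eq h]
  rw [norm_mul, norm_mul, norm_mul, mul_pow, mul_pow, mul_pow, hbracket, norm_conj,
    show ‖(4 : ℂ)‖ = 4 by norm_num]
  ring
end

section
/- For w, w' ∈ ℂ* with |w| < 1 and |w'| < 1, the complex tori T²_w = ℂ*/⟨z ↦ wz⟩ and T²_{w'} are biholomorphic if and only if w = w'. -/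
/-!
If `F` is holomorphic and nonvanishing on `ℂ*` with `F (w z) = w' F z`, then `z F'(z) / F(z)` is
invariant under `z ↦ w z`; every orbit meets the compact annulus `‖w‖ ≤ ‖z‖ ≤ 1`, so it is bounded.
The logarithmic derivative of `F ∘ exp` is therefore a bounded entire function, hence a constant `k`
by Liouville, so `F (exp t) = c exp (k t)`; `2πi`-periodicity forces `k = n ∈ ℤ`, i.e. `F = c zⁿ`,
and then `w' = wⁿ`. The inverse gives `w = w'ᵐ`, and `‖w‖, ‖w'‖ < 1` leave only `n = m = 1`.
-/

open Complex Set Metric Bornology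

/-- A biholomorphism between the tori `T²_w = ℂ*/⟨z ↦ wz⟩` and `T²_{w'} = ℂ*/⟨z ↦ w'z⟩`,
represented by its equivariant lift to the intermediate covering `ℂ*`: a holomorphic,
nonvanishing `F : ℂ* → ℂ*` with `F(wz) = w'·F(z)` together with a holomorphic equivariant
inverse up to deck transformations. -/
def ToriBiholo (w w' : ℂ) : Prop :=
  ∃ F G : ℂ → ℂ,
    DifferentiableOn ℂ F {0}ᶜ ∧ (∀ z : ℂ, z ≠ 0 → F z ≠ 0) ∧
    (∀ z : ℂ, z ≠ 0 → F (w * z) = w' * F z) ∧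
    DifferentiableOn ℂ G {0}ᶜ ∧ (∀ z : ℂ, z ≠ 0 → G z ≠ 0) ∧
    (∀ z : ℂ, z ≠ 0 → G (w' * z) = w * G z) ∧
    (∀ z : ℂ, z ≠ 0 → ∃ n : ℤ, G (F z) = w ^ n * z) ∧
    (∀ z : ℂ, z ≠ 0 → ∃ n : ℤ, F (G z) = w' ^ n * z)

lemma apply_zpow_mul_of_apply_mul {G α : Type*} [GroupWithZero G] {φ : G → α} {w : G}
    (hw : w ≠ 0) (h : ∀ z, φ (w * z) = φ z) (n : ℤ) (z : G) : φ (w ^ n * z) = φ z := by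
  induction n using Int.induction_on with
  | zero => rw [zpow_zero, one_mul]
  | succ n ih => rw [add_comm, zpow_one_add₀ hw, mul_assoc, h, ih]
  | pred n ih =>
    rw [← ih, ← h (w ^ (-(n : ℤ) - 1) * z), ← mul_assoc, ← zpow_one_add₀ hw, add_sub_cancel]

section Annulus

variable {𝕜 : Type*} [NormedDivisionRing 𝕜] {w : 𝕜}

lemma exists_zpow_mul_mem_annulus (hw0 : w ≠ 0) (hw : ‖w‖ < 1) {z : 𝕜} (hz : z ≠ 0) :
    ∃ n : ℤ, w ^ n * z ∈ closedBall (0 : 𝕜) 1 \ ball 0 ‖w‖ := by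
  have hr : 0 < ‖w‖ := norm_pos_iff.mpr hw0
  obtain ⟨n, hle, hlt⟩ := exists_mem_Ico_zpow (norm_pos_iff.mpr hz) ((one_lt_inv₀ hr).mpr hw)
  rw [inv_zpow'] at hle hlt
  refine ⟨n + 1, ?_, ?_⟩
  · rw [mem_closedBall_zero_iff, norm_mul, norm_zpow]
    calc ‖w‖ ^ (n + 1) * ‖z‖ ≤ ‖w‖ ^ (n + 1) * ‖w‖ ^ (-(n + 1)) := by gcongr
      _ = 1 := by rw [← zpow_add₀ hr.ne', add_neg_cancel, zpow_zero]
  · rw [mem_ball_zero_iff, norm_mul, norm_zpow, not_lt]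
    calc ‖w‖ = ‖w‖ ^ (n + 1) * ‖w‖ ^ (-n) := by
          rw [← zpow_add₀ hr.ne', add_neg_cancel_comm, zpow_one]
      _ ≤ ‖w‖ ^ (n + 1) * ‖z‖ := by gcongr

lemma isBounded_image_compl_zero_of_mul_invariant [ProperSpace 𝕜] {E : Type*}
    [PseudoMetricSpace E] (hw0 : w ≠ 0) (hw : ‖w‖ < 1) {φ : 𝕜 → E}
    (hφ : ContinuousOn φ {0}ᶜ) (hinv : ∀ z, φ (w * z) = φ z) : IsBounded (φ '' {0}ᶜ) := by
  have hannulus : closedBall (0 : 𝕜) 1 \ ball 0 ‖w‖ ⊆ {0}ᶜ := by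
    rintro z ⟨-, hz⟩ rfl
    exact hz (mem_ball_self (norm_pos_iff.mpr hw0))
  refine (((isCompact_closedBall 0 1).diff isOpen_ball).image_of_continuousOn
    (hφ.mono hannulus)).isBounded.subset ?_
  rintro _ ⟨z, hz, rfl⟩
  obtain ⟨n, hn⟩ := exists_zpow_mul_mem_annulus hw0 hw hz
  exact ⟨_, hn, apply_zpow_mul_of_apply_mul hw0 hinv n z⟩

end Annulus

lemma mul_logDeriv_mul_eq {𝕜 : Type*} [NontriviallyNormedField 𝕜] {F : 𝕜 → 𝕜} {w w' : 𝕜}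
    (hw0 : w ≠ 0) (hw'0 : w' ≠ 0) (hF : DifferentiableOn 𝕜 F {0}ᶜ)
    (hFeq : ∀ z : 𝕜, z ≠ 0 → F (w * z) = w' * F z) (z : 𝕜) :
    w * z * logDeriv F (w * z) = z * logDeriv F z := by
  rcases eq_or_ne z 0 with rfl | hz
  · simp
  have hcomp : logDeriv (F ∘ (w * ·)) z = logDeriv F (w * z) * w := by
    rw [logDeriv_comp (hF.differentiableAt (isOpen_compl_singleton.mem_nhds (mul_ne_zero hw0 hz)))
      (differentiableAt_id.const_mul w)]
    simp
  have hequiv : logDeriv (F ∘ (w * ·)) z = logDeriv F z := by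
    rw [(logDeriv_congr_nhds (g := fun u => w' * F u) ?_).eq_of_nhds, logDeriv_const_mul z w' hw'0]
    filter_upwards [isOpen_compl_singleton.mem_nhds hz] with u hu using hFeq u hu
  calc w * z * logDeriv F (w * z) = z * (logDeriv F (w * z) * w) := by ring
    _ = z * logDeriv F z := by rw [← hcomp, hequiv]

lemma DifferentiableOn.mul_logDeriv {F : ℂ → ℂ} {U : Set ℂ} (hF : DifferentiableOn ℂ F U)
    (hU : IsOpen U) (hFne : ∀ z ∈ U, F z ≠ 0) :
    DifferentiableOn ℂ (fun z => z * logDeriv F z) U :=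
  differentiableOn_id.mul ((hF.deriv hU).div hF hFne)

lemma exists_eq_const_mul_zpow_of_isBounded_mul_logDeriv {F : ℂ → ℂ}
    (hF : DifferentiableOn ℂ F {0}ᶜ) (hFne : ∀ z : ℂ, z ≠ 0 → F z ≠ 0)
    (hb : IsBounded ((fun z => z * logDeriv F z) '' {0}ᶜ)) :
    ∃ (c : ℂ) (n : ℤ), ∀ z : ℂ, z ≠ 0 → F z = c * z ^ n := by
  have hFd (t : ℂ) : DifferentiableAt ℂ F (exp t) :=
    hF.differentiableAt (isOpen_compl_singleton.mem_nhds (exp_ne_zero t))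
  have hf : Differentiable ℂ (F ∘ exp) := fun t => (hFd t).comp t differentiableAt_exp
  have hlog : logDeriv (F ∘ exp) = (fun z => z * logDeriv F z) ∘ exp := by
    ext t
    rw [logDeriv_comp (hFd t) differentiableAt_exp, Complex.deriv_exp, Function.comp_apply,
      mul_comm]
  have hlog_diff : Differentiable ℂ (logDeriv (F ∘ exp)) := by
    rw [hlog]
    exact fun t => ((hF.mul_logDeriv isOpen_compl_singleton hFne).differentiableAt
      (isOpen_compl_singleton.mem_nhds (exp_ne_zero t))).comp t differentiableAt_exp
  set k := logDeriv (F ∘ exp) 0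
  have hk (t : ℂ) : logDeriv (F ∘ exp) t = k :=
    hlog_diff.apply_eq_apply_of_bounded (hb.subset (by
      rw [hlog, range_comp]; exact image_mono (fun _ ⟨t, ht⟩ => ht ▸ exp_ne_zero t))) t 0
  have hexp_k (t : ℂ) : logDeriv (fun t => exp (k * t)) t = k := by
    rw [logDeriv_apply, ((hasDerivAt_id' t).const_mul k).cexp.deriv]
    field_simp [exp_ne_zero]
  obtain ⟨c, hc0, hc⟩ := (logDeriv_eqOn_iff (g := fun t => exp (k * t)) hf.differentiableOn
    (by fun_prop) isOpen_univ isPreconnected_univ (fun _ _ => exp_ne_zero _)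
    (fun t _ => hFne _ (exp_ne_zero t))).mp (fun t _ => by rw [hk, hexp_k])
  have hF_exp (t : ℂ) : F (exp t) = c * exp (k * t) := hc (mem_univ t)
  obtain ⟨n, hn⟩ : ∃ n : ℤ, k * (2 * Real.pi * I) = n * (2 * Real.pi * I) := by
    refine exp_eq_one_iff.mp (mul_left_cancel₀ hc0 ?_)
    rw [← hF_exp, exp_two_pi_mul_I, ← exp_zero, hF_exp, mul_zero, exp_zero, mul_one]
  refine ⟨c, n, fun z hz => ?_⟩
  rw [← exp_log hz, hF_exp, (mul_left_inj' two_pi_I_ne_zero).mp hn, exp_int_mul]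

theorem exists_zpow_eq_of_mul_equivariant {F : ℂ → ℂ} {w w' : ℂ} (hw0 : w ≠ 0) (hw : ‖w‖ < 1)
    (hF : DifferentiableOn ℂ F {0}ᶜ) (hFne : ∀ z : ℂ, z ≠ 0 → F z ≠ 0)
    (hFeq : ∀ z : ℂ, z ≠ 0 → F (w * z) = w' * F z) :
    ∃ n : ℤ, w' = w ^ n := by
  have hF1 : F w = w' * F 1 := by simpa using hFeq 1 one_ne_zero
  have hw'0 : w' ≠ 0 := left_ne_zero_of_mul (hF1 ▸ hFne w hw0)
  obtain ⟨c, n, hcn⟩ := exists_eq_const_mul_zpow_of_isBounded_mul_logDeriv hF hFne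
    (isBounded_image_compl_zero_of_mul_invariant hw0 hw
      (hF.mul_logDeriv isOpen_compl_singleton hFne).continuousOn
      (mul_logDeriv_mul_eq hw0 hw'0 hF hFeq))
  have hc : c ≠ 0 := by simpa [hcn 1 one_ne_zero] using hFne 1 one_ne_zero
  rw [hcn w hw0, hcn 1 one_ne_zero, one_zpow, mul_one, mul_comm] at hF1
  exact ⟨n, (mul_right_cancel₀ hc hF1).symm⟩

lemma eq_of_eq_zpow_of_eq_zpow {𝕜 : Type*} [NormedDivisionRing 𝕜] {w w' : 𝕜} {n m : ℤ}
    (hw0 : w ≠ 0) (hw : ‖w‖ < 1) (hw' : ‖w'‖ < 1) (hn : w' = w ^ n) (hm : w = w' ^ m) :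
    w = w' := by
  have hr : 0 < ‖w‖ := norm_pos_iff.mpr hw0
  have hnm : n * m = 1 := by
    apply zpow_right_injective₀ hr hw.ne
    simp only [zpow_mul, zpow_one, ← norm_zpow, ← hn, ← hm]
  rcases Int.eq_one_or_neg_one_of_mul_eq_one hnm with rfl | rfl
  · rw [hn, zpow_one]
  · rw [hn, zpow_neg_one, norm_inv] at hw'
    exact absurd hw' (one_lt_inv₀ hr |>.mpr hw).not_gt

/-- For `w, w' ∈ ℂ*` with `|w| < 1`, `|w'| < 1`, the complex tori `T²_w` and `T²_{w'}`
are biholomorphic if and only if `w = w'`. -/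
theorem tori_biholo_iff (w w' : ℂ) (hw0 : w ≠ 0) (hw'0 : w' ≠ 0)
    (hw : ‖w‖ < 1) (hw' : ‖w'‖ < 1) :
    ToriBiholo w w' ↔ w = w' := by
  constructor
  · rintro ⟨F, G, hF, hFne, hFeq, hG, hGne, hGeq, -, -⟩
    obtain ⟨n, hn⟩ := exists_zpow_eq_of_mul_equivariant hw0 hw hF hFne hFeq
    obtain ⟨m, hm⟩ := exists_zpow_eq_of_mul_equivariant hw'0 hw' hG hGne hGeq
    exact eq_of_eq_zpow_of_eq_zpow hw0 hw hw' hn hm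
  · rintro rfl
    exact ⟨id, id, differentiableOn_id, fun _ hz => hz, fun _ _ => rfl, differentiableOn_id,
      fun _ hz => hz, fun _ _ => rfl, fun _ _ => ⟨0, by simp⟩, fun _ _ => ⟨0, by simp⟩⟩
end
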